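/- Let G be a loopless graph with chromatic polynomial P(G, q) = ∑_{r=1}^{v} (−1)^{v−r} a_r q^r. Then all coefficients a_r are nonnegative (in fact a_r > 0 for κ(G) ≤ r ≤ v where κ is the number of connected components, when G is connected and has at least one vertex: a_r > 0 for 1 ≤ r ≤ v). -/

import Mathlib

/-- The chromatic polynomial of a graph, evaluated at `q`. -/
noncomputable def chromPoly {V : Type*} (G : SimpleGraph V) (q : ℕ) : ℕ :=
  Nat.card (G.Coloring (Fin q))

open SimpleGraph Finset
namespace ChromAux
variable {V : Type*}
def Proper (G : SimpleGraph V) (q : ℕ) : Type _ :=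
  {f : V → Fin q // ∀ a b, G.Adj a b → f a ≠ f b}
noncomputable def pcount (G : SimpleGraph V) (q : ℕ) : ℕ := Nat.card (Proper G q)

lemma chromPoly_eq_pcount (G : SimpleGraph V) (q : ℕ) : chromPoly G q = pcount G q := by
  refine Nat.card_congr ?_
  exact { toFun := fun c => ⟨⇑c, fun a b h => c.valid h⟩
          invFun := fun f => Coloring.mk f.1 (fun h => f.2 _ _ h)
          left_inv := fun c => rfl
          right_inv := fun f => rfl }
def contract (G : SimpleGraph V) (x y : V) : SimpleGraph {z : V // z ≠ x} where
  Adj a b := a ≠ b ∧ (G.Adj a b ∨ ((a : V) = y ∧ G.Adj x b) ∨ ((b : V) = y ∧ G.Adj x a))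
  symm := ⟨by rintro a b ⟨hne, h⟩; exact ⟨hne.symm, by tauto⟩⟩
  loopless := ⟨fun a h => h.1 rfl⟩

lemma contract_adj {G : SimpleGraph V} {x y : V} {a b : {z : V // z ≠ x}} :
    (contract G x y).Adj a b ↔
      a ≠ b ∧ (G.Adj a b ∨ ((a : V) = y ∧ G.Adj x b) ∨ ((b : V) = y ∧ G.Adj x a)) := Iff.rfl

instance properFinite [Finite V] (G : SimpleGraph V) (q : ℕ) : Finite (Proper G q) := by
  unfold Proper; infer_instance

lemma pcount_no_edges [Finite V] {G : SimpleGraph V} (h : ∀ a b, ¬ G.Adj a b) (q : ℕ) :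
    pcount G q = q ^ Nat.card V := by
  have e : Proper G q ≃ (V → Fin q) :=
    Equiv.subtypeUnivEquiv (fun f a b hab => absurd hab (h a b))
  rw [pcount, Nat.card_congr e, Nat.card_fun, Nat.card_eq_fintype_card (α := Fin q),
    Fintype.card_fin]

section Extend
variable (G : SimpleGraph V) (x y : V) (hyx : y ≠ x) {q : ℕ}

open Classical in
noncomputable def extFun (g : Proper (contract G x y) q) : V → Fin q :=
  fun z => if h : z = x then g.1 ⟨y, hyx⟩ else g.1 ⟨z, h⟩

open Classical

lemma extFun_x (g : Proper (contract G x y) q) : extFun G x y hyx g x = g.1 ⟨y, hyx⟩ :=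
  dif_pos rfl

lemma extFun_ne (g : Proper (contract G x y) q) {z : V} (hz : z ≠ x) :
    extFun G x y hyx g z = g.1 ⟨z, hz⟩ := dif_neg hz

lemma extFun_proper (hxy : G.Adj x y) (g : Proper (contract G x y) q) :
    ∀ a b, (G.deleteEdges {s(x,y)}).Adj a b → extFun G x y hyx g a ≠ extFun G x y hyx g b := by
  intro a b hab
  rw [deleteEdges_adj] at hab
  obtain ⟨hab', hs⟩ := hab
  simp only [Set.mem_singleton_iff, Sym2.eq_iff] at hs
  push_neg at hs
  have hne := hab'.ne
  by_cases ha : a = x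
  · subst ha
    have hbx : b ≠ a := hne.symm
    have hby : b ≠ y := fun hb => (hs.1 rfl) hb
    rw [extFun_x, extFun_ne G a y hyx g hbx]
    exact g.2 ⟨y, hyx⟩ ⟨b, hbx⟩ ⟨by simp [Subtype.ext_iff, Ne.symm hby], Or.inr (Or.inl ⟨rfl, hab'⟩)⟩
  · by_cases hb : b = x
    · subst hb
      have hay : a ≠ y := fun h1 => (hs.2 h1) rfl
      rw [extFun_x, extFun_ne G b y hyx g ha]
      exact g.2 ⟨a, ha⟩ ⟨y, hyx⟩ ⟨by simp [Subtype.ext_iff, hay], Or.inr (Or.inr ⟨rfl, hab'.symm⟩)⟩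
    · rw [extFun_ne G x y hyx g ha, extFun_ne G x y hyx g hb]
      exact g.2 ⟨a, ha⟩ ⟨b, hb⟩ ⟨by simp [Subtype.ext_iff, hne], Or.inl hab'⟩

lemma extFun_eq (g : Proper (contract G x y) q) :
    extFun G x y hyx g x = extFun G x y hyx g y := by
  rw [extFun_x, extFun_ne G x y hyx g hyx]

end Extend

/-- Deletion–contraction for counting colorings. -/
lemma pcount_del [Finite V] (G : SimpleGraph V) {x y : V} (hxy : G.Adj x y) (q : ℕ) :
    pcount (G.deleteEdges {s(x,y)}) q = pcount G q + pcount (contract G x y) q := by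
  classical
  have hyx : y ≠ x := hxy.ne'
  have hsplit : Proper (G.deleteEdges {s(x,y)}) q ≃
      {f : Proper (G.deleteEdges {s(x,y)}) q // f.1 x ≠ f.1 y} ⊕
      {f : Proper (G.deleteEdges {s(x,y)}) q // ¬ f.1 x ≠ f.1 y} :=
    (Equiv.sumCompl _).symm
  have prop1 : ∀ (f : {f : Proper (G.deleteEdges {s(x,y)}) q // f.1 x ≠ f.1 y})
      (a b : V), G.Adj a b → f.1.1 a ≠ f.1.1 b := by
    intro f a b hab
    by_cases hs : s(a,b) = s(x,y)
    · rcases Sym2.eq_iff.mp hs with ⟨rfl, rfl⟩ | ⟨rfl, rfl⟩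
      · exact f.2
      · exact (f.2 ∘ Eq.symm)
    · exact f.1.2 a b (by rw [deleteEdges_adj]; exact ⟨hab, by simpa using hs⟩)
  have e1 : {f : Proper (G.deleteEdges {s(x,y)}) q // f.1 x ≠ f.1 y} ≃ Proper G q :=
    { toFun := fun f => ⟨f.1.1, prop1 f⟩
      invFun := fun g => ⟨⟨g.1, fun a b h => g.2 a b (deleteEdges_adj.mp h).1⟩, g.2 x y hxy⟩
      left_inv := fun f => Subtype.ext (Subtype.ext rfl)
      right_inv := fun g => rfl }
  have prop2 : ∀ (f : {f : Proper (G.deleteEdges {s(x,y)}) q // ¬ f.1 x ≠ f.1 y})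
      (a b : {z : V // z ≠ x}), (contract G x y).Adj a b → f.1.1 a.1 ≠ f.1.1 b.1 := by
    rintro f a b ⟨hne, hab | ⟨hay, hxb⟩ | ⟨hby, hxa⟩⟩
    · refine f.1.2 a.1 b.1 ?_
      rw [deleteEdges_adj]
      refine ⟨hab, ?_⟩
      simp only [Set.mem_singleton_iff, Sym2.eq_iff]
      rintro (⟨h1, h2⟩ | ⟨h1, h2⟩)
      · exact a.2 h1
      · exact b.2 h2
    · have hfe : f.1.1 x = f.1.1 y := not_not.mp f.2
      have hby : (b : V) ≠ y := fun hb => hne (Subtype.ext (hay.trans hb.symm))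
      have key : f.1.1 x ≠ f.1.1 b.1 := by
        refine f.1.2 x b.1 ?_
        rw [deleteEdges_adj]
        refine ⟨hxb, ?_⟩
        simp only [Set.mem_singleton_iff, Sym2.eq_iff]
        rintro (⟨h1, h2⟩ | ⟨h1, h2⟩)
        · exact hby h2
        · exact b.2 h2
      rw [hay, ← hfe]; exact key
    · have hfe : f.1.1 x = f.1.1 y := not_not.mp f.2
      have hay : (a : V) ≠ y := fun ha => hne (Subtype.ext (ha.trans hby.symm))
      have key : f.1.1 x ≠ f.1.1 a.1 := by
        refine f.1.2 x a.1 ?_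
        rw [deleteEdges_adj]
        refine ⟨hxa, ?_⟩
        simp only [Set.mem_singleton_iff, Sym2.eq_iff]
        rintro (⟨h1, h2⟩ | ⟨h1, h2⟩)
        · exact hay h2
        · exact a.2 h2
      rw [hby, ← hfe]; exact key.symm
  have e2 : {f : Proper (G.deleteEdges {s(x,y)}) q // ¬ f.1 x ≠ f.1 y}
      ≃ Proper (contract G x y) q :=
    { toFun := fun f => ⟨fun z => f.1.1 z.1, prop2 f⟩
      invFun := fun g => ⟨⟨extFun G x y hyx g, extFun_proper G x y hyx hxy g⟩,
        not_not.mpr (extFun_eq G x y hyx g)⟩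
      left_inv := by
        intro f
        have hfe : f.1.1 x = f.1.1 y := not_not.mp f.2
        refine Subtype.ext (Subtype.ext (funext fun z => ?_))
        by_cases hz : z = x
        · subst hz
          refine (extFun_x G z y hyx _).trans hfe.symm
        · exact extFun_ne G x y hyx _ hz
      right_inv := by
        intro g
        refine Subtype.ext (funext fun z => ?_)
        exact extFun_ne G x y hyx g z.2 }
  rw [pcount, Nat.card_congr hsplit, Nat.card_sum, Nat.card_congr e1, Nat.card_congr e2,
    pcount, pcount]
noncomputable def ncomp (G : SimpleGraph V) : ℕ := Nat.card G.ConnectedComponent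

lemma mk_surjective (G : SimpleGraph V) : Function.Surjective G.connectedComponentMk :=
  ConnectedComponent.ind (fun v => ⟨v, rfl⟩)

lemma ncomp_le_card [Finite V] (G : SimpleGraph V) : ncomp G ≤ Nat.card V :=
  Nat.card_le_card_of_surjective _ (mk_surjective G)

lemma ncomp_le_ncomp_del [Finite V] (G : SimpleGraph V) (s : Set (Sym2 V)) :
    ncomp G ≤ ncomp (G.deleteEdges s) := by
  refine Nat.card_le_card_of_surjective
    (ConnectedComponent.map (Hom.ofLE (G.deleteEdges_le s))) ?_
  exact ConnectedComponent.ind (fun v => ⟨(G.deleteEdges s).connectedComponentMk v, rfl⟩)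

lemma ncomp_eq_card_of_no_edges [Finite V] {G : SimpleGraph V} (h : ∀ a b, ¬ G.Adj a b) :
    ncomp G = Nat.card V := by
  refine (Nat.card_congr (Equiv.ofBijective G.connectedComponentMk ⟨?_, mk_surjective G⟩)).symm
  intro a b hab
  obtain ⟨w⟩ := ConnectedComponent.eq.mp hab
  cases w with
  | nil => rfl
  | cons h' p => exact absurd h' (h _ _)

lemma ncomp_eq_one (G : SimpleGraph V) (h : G.Connected) : ncomp G = 1 := by
  rw [ncomp, Nat.card_eq_one_iff_unique]
  refine ⟨⟨fun c d => ?_⟩, ⟨G.connectedComponentMk h.nonempty.some⟩⟩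
  refine ConnectedComponent.ind₂ (fun a b => ?_) c d
  exact ConnectedComponent.sound (h.preconnected a b)

section Contract
variable (G : SimpleGraph V) {x y : V}

lemma contract_reach (hxy : G.Adj x y) {a b : {z : V // z ≠ x}}
    (h : (contract G x y).Adj a b) : G.Reachable a.1 b.1 := by
  obtain ⟨hne, hab | ⟨hay, hxb⟩ | ⟨hby, hxa⟩⟩ := h
  · exact hab.reachable
  · rw [hay]
    exact (hxy.symm.reachable).trans hxb.reachable
  · rw [hby]
    exact ((hxy.symm.reachable).trans hxa.reachable).symm

open Classical in
noncomputable def toSub (hyx : y ≠ x) : V → {z : V // z ≠ x} :=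
  fun z => if h : z = x then ⟨y, hyx⟩ else ⟨z, h⟩

lemma toSub_adj (hyx : y ≠ x) {a b : V} (h : G.Adj a b) :
    toSub (V := V) (x := x) hyx a = toSub hyx b ∨
      (contract G x y).Adj (toSub hyx a) (toSub hyx b) := by
  by_cases ha : a = x
  · subst ha
    by_cases hb : b = a
    · exact Or.inl (by rw [hb])
    · simp only [toSub, dif_pos rfl, dif_neg hb]
      by_cases hby : b = y
      · subst hby; exact Or.inl rfl
      · exact Or.inr ⟨by simp [Subtype.ext_iff, Ne.symm hby], Or.inr (Or.inl ⟨rfl, h⟩)⟩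
  · by_cases hb : b = x
    · subst hb
      simp only [toSub, dif_neg ha, dif_pos rfl]
      by_cases hay : a = y
      · subst hay; exact Or.inl rfl
      · exact Or.inr ⟨by simp [Subtype.ext_iff, hay], Or.inr (Or.inr ⟨rfl, h.symm⟩)⟩
    · simp only [toSub, dif_neg ha, dif_neg hb]
      exact Or.inr ⟨by simp [Subtype.ext_iff, h.ne], Or.inl h⟩

lemma ncomp_contract (hxy : G.Adj x y) : ncomp (contract G x y) = ncomp G := by
  have hyx : y ≠ x := hxy.ne'
  have hF : ∀ (v w : {z : V // z ≠ x}), (contract G x y).Reachable v w →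
      G.connectedComponentMk v.1 = G.connectedComponentMk w.1 := by
    intro v w h
    obtain ⟨p⟩ := h
    induction p with
    | nil => rfl
    | cons h' p ih =>
      exact (ConnectedComponent.sound (contract_reach G hxy h')).trans ih
  have hH : ∀ (v w : V), G.Reachable v w →
      (contract G x y).connectedComponentMk (toSub hyx v)
        = (contract G x y).connectedComponentMk (toSub hyx w) := by
    intro v w h
    obtain ⟨p⟩ := h
    induction p with
    | nil => rfl
    | cons h' p ih =>
      rcases toSub_adj G hyx h' with heq | hadj
      · rw [heq]; exact ih
      · exact (ConnectedComponent.sound hadj.reachable).trans ih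
  let F : (contract G x y).ConnectedComponent → G.ConnectedComponent :=
    ConnectedComponent.lift (fun z => G.connectedComponentMk z.1)
      (fun v w p _ => hF v w ⟨p⟩)
  let H : G.ConnectedComponent → (contract G x y).ConnectedComponent :=
    ConnectedComponent.lift (fun z => (contract G x y).connectedComponentMk (toSub hyx z))
      (fun v w p _ => hH v w ⟨p⟩)
  have hHF : ∀ c, H (F c) = c := by
    refine ConnectedComponent.ind (fun z => ?_)
    show (contract G x y).connectedComponentMk (toSub hyx z.1)
      = (contract G x y).connectedComponentMk z
    congr 1
    simp only [toSub, dif_neg z.2]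
  have hFH : ∀ c, F (H c) = c := by
    refine ConnectedComponent.ind (fun z => ?_)
    show G.connectedComponentMk (toSub (x := x) hyx z).1 = G.connectedComponentMk z
    by_cases hz : z = x
    · subst hz
      simp only [toSub, dif_pos rfl]
      exact ConnectedComponent.sound hxy.symm.reachable
    · simp only [toSub, dif_neg hz]
  exact Nat.card_congr ⟨F, H, hHF, hFH⟩
end Contract

lemma card_sub_ne [Fintype V] (x : V) : Nat.card {z : V // z ≠ x} = Nat.card V - 1 := by
  classical
  simp only [Nat.card_eq_fintype_card]
  rw [Fintype.card_subtype_compl (p := fun z => z = x), Fintype.card_subtype_eq x]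

lemma exists_adj [Fintype V] (G : SimpleGraph V) (h : ¬ ∀ a b, ¬ G.Adj a b) :
    ∃ x y, G.Adj x y := by
  push_neg at h
  simpa using h

lemma ncard_del_lt [Fintype V] (G : SimpleGraph V) {x y : V} (hxy : G.Adj x y) :
    (G.deleteEdges {s(x,y)}).edgeSet.ncard < G.edgeSet.ncard := by
  rw [edgeSet_deleteEdges]
  refine Set.ncard_lt_ncard ?_ (G.edgeSet.toFinite)
  refine ⟨Set.diff_subset, fun hsub => ?_⟩
  have := hsub (G.mem_edgeSet.mpr hxy)
  simp at this

theorem key : ∀ n m : ℕ, ∀ (V : Type) (_ : Fintype V) (G : SimpleGraph V),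
    Nat.card V = n → G.edgeSet.ncard = m →
    ∃ b : ℕ → ℕ, (∀ r, r < ncomp G ∨ n < r → b r = 0) ∧
      (∀ r, ncomp G ≤ r → r ≤ n → 0 < b r) ∧
      ∀ q : ℕ, (pcount G q : ℤ) =
        ∑ r ∈ Finset.range (n+1), (-1:ℤ)^(n-r) * (b r : ℤ) * (q:ℤ)^r := by
  intro n
  induction n using Nat.strong_induction_on with
  | _ n IHn =>
  intro m
  induction m using Nat.strong_induction_on with
  | _ m IHm =>
  intro V iV G hn hm
  haveI := iV
  by_cases hE : ∀ a b, ¬ G.Adj a b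
  · -- no edges
    have hk : ncomp G = n := by rw [ncomp_eq_card_of_no_edges hE, hn]
    refine ⟨fun r => if r = n then 1 else 0, ?_, ?_, ?_⟩
    · intro r hr
      have : r ≠ n := by rcases hr with h | h <;> omega
      simp [this]
    · intro r h1 h2
      have : r = n := by rw [hk] at h1; omega
      simp [this]
    · intro q
      rw [pcount_no_edges hE, hn]
      rw [Finset.sum_eq_single_of_mem n (Finset.self_mem_range_succ n)]
      · simp
      · intro r _ hrn
        simp [hrn]
  · obtain ⟨x, y, hxy⟩ := exists_adj G hE
    have hyx : y ≠ x := hxy.ne'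
    have hn1 : 1 ≤ n := by
      rw [← hn]
      haveI : Nonempty V := ⟨x⟩
      exact Nat.card_pos
    classical
    -- deletion
    obtain ⟨b', hb'0, hb'pos, hb'sum⟩ :=
      IHm ((G.deleteEdges {s(x,y)}).edgeSet.ncard) (hm ▸ ncard_del_lt G hxy) V iV
        (G.deleteEdges {s(x,y)}) hn rfl
    -- contraction
    obtain ⟨c, hc0, hcpos, hcsum⟩ :=
      IHn (n-1) (by omega) ((contract G x y).edgeSet.ncard) ({z : V // z ≠ x}) inferInstance (contract G x y)
        (by rw [card_sub_ne x, hn]) rfl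
    have hkcon : ncomp (contract G x y) = ncomp G := ncomp_contract G hxy
    have hkdel : ncomp G ≤ ncomp (G.deleteEdges {s(x,y)}) := ncomp_le_ncomp_del G _
    have hkn : ncomp (G.deleteEdges {s(x,y)}) ≤ n := by
      rw [← hn]; exact ncomp_le_card _
    refine ⟨fun r => b' r + c r, ?_, ?_, ?_⟩
    · intro r hr
      have h1 : b' r = 0 := by
        refine hb'0 r ?_
        rcases hr with h | h
        · exact Or.inl (lt_of_lt_of_le h hkdel)
        · exact Or.inr h
      have h2 : c r = 0 := by
        refine hc0 r ?_
        rcases hr with h | h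
        · exact Or.inl (by rw [hkcon]; exact h)
        · exact Or.inr (by omega)
      show b' r + c r = 0
      omega
    · intro r h1 h2
      show 0 < b' r + c r
      rcases Nat.lt_or_ge r n with hr | hr
      · have := hcpos r (by rw [hkcon]; exact h1) (by omega)
        omega
      · have := hb'pos r (by omega) h2
        omega
    · intro q
      have hsplit := pcount_del G hxy q
      have hPdel := hb'sum q
      have hPcon := hcsum q
      rw [show n - 1 + 1 = n from by omega] at hPcon
      have hcn : (c n : ℤ) = 0 := by
        have : c n = 0 := hc0 n (Or.inr (by omega))
        exact_mod_cast congrArg (Nat.cast : ℕ → ℤ) this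
      have hPG : (pcount G q : ℤ) =
          (pcount (G.deleteEdges {s(x,y)}) q : ℤ) - (pcount (contract G x y) q : ℤ) := by
        have := congrArg (Nat.cast : ℕ → ℤ) hsplit
        push_cast at this
        linarith
      have h2sum : ∑ r ∈ Finset.range (n+1), (-1:ℤ)^(n-r) * (c r : ℤ) * (q:ℤ)^r
          = - ∑ r ∈ Finset.range n, (-1:ℤ)^(n-1-r) * (c r : ℤ) * (q:ℤ)^r := by
        rw [Finset.sum_range_succ, hcn]
        have hcongr : ∀ r ∈ Finset.range n,
            (-1:ℤ)^(n-r) * (c r : ℤ) * (q:ℤ)^r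
              = -((-1:ℤ)^(n-1-r) * (c r : ℤ) * (q:ℤ)^r) := by
          intro r hr
          rw [Finset.mem_range] at hr
          rw [show n - r = (n-1-r) + 1 from by omega, pow_succ]
          ring
        rw [Finset.sum_congr rfl hcongr]
        simp [Finset.sum_neg_distrib]
      have hmain : ∑ r ∈ Finset.range (n+1), (-1:ℤ)^(n-r) * ((b' r + c r : ℕ) : ℤ) * (q:ℤ)^r
          = (∑ r ∈ Finset.range (n+1), (-1:ℤ)^(n-r) * (b' r : ℤ) * (q:ℤ)^r)
            + ∑ r ∈ Finset.range (n+1), (-1:ℤ)^(n-r) * (c r : ℤ) * (q:ℤ)^r := by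
        rw [← Finset.sum_add_distrib]
        refine Finset.sum_congr rfl (fun r _ => ?_)
        push_cast
        ring
      rw [hPG, hPdel, hPcon, hmain, h2sum]
      ring

end ChromAux

open ChromAux

/-- For a loopless connected graph `G` on `v ≥ 1` vertices with chromatic polynomial
`P(G, q) = ∑_{r=1}^{v} (−1)^{v−r} a_r q^r`, all coefficients are positive:
`a_r > 0` for `1 ≤ r ≤ v`. -/
theorem coeffs_pos {V : Type*} [Fintype V] (G : SimpleGraph V)
    (hconn : G.Connected)
    (v : ℕ) (hv : Nat.card V = v) (hvpos : 1 ≤ v)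
    (a : ℕ → ℤ)
    (hP : ∀ q : ℕ, (chromPoly G q : ℤ) =
      ∑ r ∈ Finset.Icc 1 v, (-1 : ℤ) ^ (v - r) * a r * (q : ℤ) ^ r) :
    ∀ r, 1 ≤ r → r ≤ v → 0 < a r := by
  classical
  set N := Fintype.card V with hN
  have hNv : N = v := by rw [← hv, Nat.card_eq_fintype_card]
  set φ := Fintype.equivFin V with hφ
  set G' : SimpleGraph (Fin N) := G.comap ⇑φ.symm with hG'
  have hadj' : ∀ a b : Fin N, G'.Adj a b ↔ G.Adj (φ.symm a) (φ.symm b) := fun a b => Iff.rfl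
  -- counting transfer
  have hpc : ∀ q, pcount G' q = pcount G q := by
    intro q
    refine Nat.card_congr ?_
    exact
      { toFun := fun f => ⟨fun z => f.1 (φ z), fun a b hab => f.2 (φ a) (φ b)
          (by rw [hadj']; simpa using hab)⟩
        invFun := fun g => ⟨fun i => g.1 (φ.symm i), fun a b hab => g.2 _ _ ((hadj' a b).mp hab)⟩
        left_inv := fun f => Subtype.ext (funext fun i => by simp)
        right_inv := fun g => Subtype.ext (funext fun z => by simp) }
  -- connectivity transfer
  let homφ : G →g G' :=
    { toFun := ⇑φ
      map_rel' := fun {a b} h => by rw [hadj']; simpa using h }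
  have hnc1 : ncomp G' = 1 := by
    rw [ncomp, Nat.card_eq_one_iff_unique]
    refine ⟨⟨fun c d => ?_⟩, ⟨G'.connectedComponentMk (φ hconn.nonempty.some)⟩⟩
    refine ConnectedComponent.ind₂ (fun i j => ?_) c d
    refine ConnectedComponent.sound ?_
    have h2 : G'.Reachable (φ (φ.symm i)) (φ (φ.symm j)) :=
      (hconn.preconnected (φ.symm i) (φ.symm j)).map homφ
    simpa using h2
  obtain ⟨b, hb0, hbpos, hbsum⟩ :=
    key v (G'.edgeSet.ncard) (Fin N) inferInstance G'
      (by rw [Nat.card_eq_fintype_card, Fintype.card_fin, hNv]) rfl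
  have hsum : ∀ q : ℕ, (chromPoly G q : ℤ) =
      ∑ r ∈ Finset.range (v+1), (-1:ℤ)^(v-r) * (b r : ℤ) * (q:ℤ)^r := by
    intro q
    rw [chromPoly_eq_pcount, ← hpc q]
    exact hbsum q
  have hb00 : b 0 = 0 := hb0 0 (Or.inl (by rw [hnc1]; omega))
  have hrange : Finset.range (v+1) = insert 0 (Finset.Icc 1 v) := by
    ext r
    simp only [Finset.mem_range, Finset.mem_insert, Finset.mem_Icc]
    omega
  have hIcc : ∀ q : ℕ, ∑ r ∈ Finset.Icc 1 v, (-1:ℤ)^(v-r) * ((a r : ℤ) - (b r : ℤ)) * (q:ℤ)^r = 0 := by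
    intro q
    have h1 := hP q
    have h2 := hsum q
    rw [hrange, Finset.sum_insert (by simp)] at h2
    rw [hb00] at h2
    simp only [Nat.cast_zero, mul_zero, zero_mul, zero_add] at h2
    have h3 : ∑ r ∈ Finset.Icc 1 v, (-1:ℤ)^(v-r) * a r * (q:ℤ)^r
        = ∑ r ∈ Finset.Icc 1 v, (-1:ℤ)^(v-r) * (b r : ℤ) * (q:ℤ)^r := by
      rw [← h1, ← h2]
    calc ∑ r ∈ Finset.Icc 1 v, (-1:ℤ)^(v-r) * ((a r : ℤ) - (b r : ℤ)) * (q:ℤ)^r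
        = ∑ r ∈ Finset.Icc 1 v, ((-1:ℤ)^(v-r) * a r * (q:ℤ)^r
            - (-1:ℤ)^(v-r) * (b r : ℤ) * (q:ℤ)^r) := by
          refine Finset.sum_congr rfl (fun r _ => by ring)
      _ = 0 := by rw [Finset.sum_sub_distrib, h3, sub_self]
  -- polynomial argument
  set p : Polynomial ℤ :=
    ∑ r ∈ Finset.Icc 1 v, Polynomial.C ((-1:ℤ)^(v-r) * ((a r : ℤ) - (b r : ℤ))) * Polynomial.X ^ r
    with hp
  have heval : ∀ q : ℕ, p.eval (q : ℤ) = 0 := by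
    intro q
    rw [hp]
    simp only [Polynomial.eval_finset_sum, Polynomial.eval_mul, Polynomial.eval_pow,
      Polynomial.eval_C, Polynomial.eval_X]
    exact hIcc q
  have hp0 : p = 0 := by
    refine Polynomial.eq_zero_of_infinite_isRoot p ?_
    refine Set.Infinite.mono ?_ (Set.infinite_range_of_injective (f := (Nat.cast : ℕ → ℤ))
      Nat.cast_injective)
    rintro _ ⟨q, rfl⟩
    exact heval q
  intro r hr1 hr2
  have hcoeff : p.coeff r = (-1:ℤ)^(v-r) * ((a r : ℤ) - (b r : ℤ)) := by
    rw [hp, Polynomial.finset_sum_coeff]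
    rw [Finset.sum_eq_single_of_mem r (Finset.mem_Icc.mpr ⟨hr1, hr2⟩)]
    · rw [Polynomial.coeff_C_mul, Polynomial.coeff_X_pow, if_pos rfl, mul_one]
    · intro s _ hs
      rw [Polynomial.coeff_C_mul, Polynomial.coeff_X_pow, if_neg (fun h => hs h.symm), mul_zero]
  rw [hp0, Polynomial.coeff_zero] at hcoeff
  have hab : (a r : ℤ) = (b r : ℤ) := by
    rcases mul_eq_zero.mp hcoeff.symm with h | h
    · exact absurd h (pow_ne_zero _ (by norm_num))
    · linarith
  have hbr : 0 < b r := hbpos r (by rw [hnc1]; exact hr1) hr2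
  rw [hab]
  exact_mod_cast hbr
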